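/- If f : (X,𝒯₁) → (Y,𝒯₂) is L-fuzzy contra-Semi-Preclosed, then f is L-fuzzy weakly Semi-Preopen; and if f is L-fuzzy contra-Semi-Preopen, then f is L-fuzzy weakly Semi-Preclosed. -/
import Mathlib


namespace LFuzzy

/-- A (complete) DeMorgan structure on a complete lattice: an order-reversing involution. -/
structure DeMorgan (L : Type*) [CompleteLattice L] where
  compl : L → L
  compl_antitone : ∀ a b : L, a ≤ b → compl b ≤ compl a
  compl_involutive : ∀ a : L, compl (compl a) = a

variable {L X Y : Type*} [CompleteLattice L]

/-- Pointwise DeMorgan complement of an L-fuzzy subset. -/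
def pcompl (c : DeMorgan L) (U : X → L) : X → L := fun x => c.compl (U x)

/-- An L-fuzzy topology on X. -/
def IsTopology (T : (X → L) → L) : Prop :=
  T ⊥ = ⊤ ∧ T ⊤ = ⊤ ∧ (∀ U V : X → L, T U ⊓ T V ≤ T (U ⊓ V)) ∧
    ∀ S : Set (X → L), (⨅ U ∈ S, T U) ≤ T (sSup S)

/-- r-fuzzy closure operator. -/
def cl (c : DeMorgan L) (T : (X → L) → L) (U : X → L) (r : L) : X → L :=
  sInf {V | U ≤ V ∧ r ≤ T (pcompl c V)}

/-- r-fuzzy interior operator. -/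
def intr (T : (X → L) → L) (U : X → L) (r : L) : X → L :=
  sSup {V | V ≤ U ∧ r ≤ T V}

/-- r-fuzzy Semi-Preopen. -/
def SPO (c : DeMorgan L) (T : (X → L) → L) (U : X → L) (r : L) : Prop :=
  U ≤ cl c T (intr T (cl c T U r) r) r

/-- r-fuzzy Semi-Preclosed. -/
def SPC (c : DeMorgan L) (T : (X → L) → L) (U : X → L) (r : L) : Prop :=
  intr T (cl c T (intr T U r) r) r ≤ U

/-- Semi-Preinterior. -/
def spInt (c : DeMorgan L) (T : (X → L) → L) (V : X → L) (r : L) : X → L :=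
  sSup {W | W ≤ V ∧ SPO c T W r}

/-- Semi-Preclosure. -/
def spCl (c : DeMorgan L) (T : (X → L) → L) (V : X → L) (r : L) : X → L :=
  sInf {W | V ≤ W ∧ SPC c T W r}

/-- r-fuzzy θ-closure. -/
def thCl (c : DeMorgan L) (T : (X → L) → L) (U : X → L) (r : L) : X → L :=
  sInf {V | U ≤ intr T V r ∧ r ≤ T (pcompl c V)}

/-- r-fuzzy θ-interior. -/
def thInt (c : DeMorgan L) (T : (X → L) → L) (U : X → L) (r : L) : X → L :=
  sSup {V | cl c T V r ≤ U ∧ r ≤ T V}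

/-- Image L-fuzzy set operator induced by f. -/
def im (f : X → Y) (U : X → L) : Y → L := fun y => ⨆ x, ⨆ _ : f x = y, U x

/-- Preimage L-fuzzy set operator induced by f. -/
def pre (f : X → Y) (V : Y → L) : X → L := fun x => V (f x)

/-- L-fuzzy weakly open function. -/
def WeaklyOpen (c : DeMorgan L) (T₁ : (X → L) → L) (T₂ : (Y → L) → L) (f : X → Y) : Prop :=
  ∀ (U : X → L) (r : L), r ≠ ⊥ → r ≤ T₁ U →
    im f U ≤ intr T₂ (im f (cl c T₁ U r)) r

/-- L-fuzzy weakly Semi-Preopen function. -/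
def WeaklySPOpen (c : DeMorgan L) (T₁ : (X → L) → L) (T₂ : (Y → L) → L) (f : X → Y) : Prop :=
  ∀ (U : X → L) (r : L), r ≠ ⊥ → r ≤ T₁ U →
    im f U ≤ spInt c T₂ (im f (cl c T₁ U r)) r

/-- L-fuzzy weakly Semi-Preclosed function. -/
def WeaklySPClosed (c : DeMorgan L) (T₁ : (X → L) → L) (T₂ : (Y → L) → L) (f : X → Y) : Prop :=
  ∀ (U : X → L) (r : L), r ≠ ⊥ → r ≤ T₁ (pcompl c U) →
    spCl c T₂ (im f (intr T₁ U r)) r ≤ im f U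

/-- L-fuzzy strongly continuous function. -/
def StronglyCont (c : DeMorgan L) (T₁ : (X → L) → L) (f : X → Y) : Prop :=
  ∀ (U : X → L) (r : L), r ≠ ⊥ → im f (cl c T₁ U r) ≤ im f U

/-- Quasi-coincidence of two L-fuzzy subsets. -/
def Quasi (c : DeMorgan L) (A B : X → L) : Prop := ∃ x, ¬ A x ≤ c.compl (B x)

end LFuzzy

open LFuzzy

variable {L X Y : Type*}

/-- L-fuzzy contra-Semi-Preclosed function. -/
def ContraSPClosed [CompleteLattice L] (c : DeMorgan L) (T₁ : (X → L) → L)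
    (T₂ : (Y → L) → L) (f : X → Y) : Prop :=
  ∀ (U : X → L) (r : L), r ≠ ⊥ → r ≤ T₁ (pcompl c U) → SPO c T₂ (im f U) r

/-- L-fuzzy contra-Semi-Preopen function. -/
def ContraSPOpen [CompleteLattice L] (c : DeMorgan L) (T₁ : (X → L) → L)
    (T₂ : (Y → L) → L) (f : X → Y) : Prop :=
  ∀ (U : X → L) (r : L), r ≠ ⊥ → r ≤ T₁ U → SPC c T₂ (im f U) r

section aux
variable [CompleteLattice L] (c : DeMorgan L) (T : (X → L) → L)

lemma aux_le_compl_iff {a b : L} : a ≤ c.compl b ↔ b ≤ c.compl a := by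
  constructor
  · intro h
    have := c.compl_antitone _ _ h
    rw [c.compl_involutive] at this
    exact this
  · intro h
    have := c.compl_antitone _ _ h
    rw [c.compl_involutive] at this
    exact this

lemma aux_pcompl_sInf (S : Set (X → L)) :
    pcompl c (sInf S) = sSup (pcompl c '' S) := by
  funext x
  have hs : sSup (pcompl c '' S) x = ⨆ g ∈ pcompl c '' S, g x := by
    rw [sSup_apply, iSup_subtype']
  have hi : sInf S x = ⨅ g ∈ S, g x := by
    rw [sInf_apply, iInf_subtype']
  apply le_antisymm
  · have key : c.compl (sSup (pcompl c '' S) x) ≤ sInf S x := by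
      rw [hi]
      apply le_iInf₂
      intro V hV
      have h1 : pcompl c V x ≤ sSup (pcompl c '' S) x := by
        rw [hs]; exact le_iSup₂ (f := fun g (_ : g ∈ pcompl c '' S) => g x)
          (pcompl c V) ⟨V, hV, rfl⟩
      have := c.compl_antitone _ _ h1
      rwa [show c.compl (pcompl c V x) = V x from c.compl_involutive _] at this
    have := c.compl_antitone _ _ key
    rwa [c.compl_involutive] at this
  · rw [hs]
    apply iSup₂_le
    rintro g ⟨V, hV, rfl⟩
    exact c.compl_antitone _ _ (by rw [hi]; exact iInf₂_le V hV)

lemma aux_le_cl (U : X → L) (r : L) : U ≤ cl c T U r :=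
  le_sInf fun _ hV => hV.1

lemma aux_cl_closed (hT : IsTopology T) (U : X → L) (r : L) :
    r ≤ T (pcompl c (cl c T U r)) := by
  unfold cl
  rw [aux_pcompl_sInf]
  refine le_trans ?_ (hT.2.2.2 _)
  apply le_iInf₂
  rintro g ⟨V, hV, rfl⟩
  exact hV.2

lemma aux_intr_le (U : X → L) (r : L) : intr T U r ≤ U :=
  sSup_le fun _ hV => hV.1

lemma aux_intr_open (hT : IsTopology T) (U : X → L) (r : L) : r ≤ T (intr T U r) := by
  refine le_trans ?_ (hT.2.2.2 _)
  exact le_iInf₂ fun V hV => hV.2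

lemma aux_im_mono (f : X → Y) {U V : X → L} (h : U ≤ V) : im f U ≤ im f V := by
  intro y
  exact iSup_mono fun x => iSup_mono fun _ => h x

lemma aux_le_spInt (T : (Y → L) → L) {V W : Y → L} {r : L} (h : W ≤ V) (hW : SPO c T W r) :
    W ≤ spInt c T V r :=
  le_sSup ⟨h, hW⟩

lemma aux_spCl_le (T : (Y → L) → L) {V W : Y → L} {r : L} (h : V ≤ W) (hW : SPC c T W r) :
    spCl c T V r ≤ W :=
  sInf_le ⟨h, hW⟩

end aux

theorem stmt17 [CompleteLattice L] (c : DeMorgan L)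
    (T₁ : (X → L) → L) (T₂ : (Y → L) → L) (hT₁ : IsTopology T₁) (hT₂ : IsTopology T₂)
    (f : X → Y) :
    (ContraSPClosed c T₁ T₂ f → WeaklySPOpen c T₁ T₂ f) ∧
      (ContraSPOpen c T₁ T₂ f → WeaklySPClosed c T₁ T₂ f) := by
  constructor
  · intro hf U r hr _
    have hSPO : SPO c T₂ (im f (cl c T₁ U r)) r :=
      hf (cl c T₁ U r) r hr (aux_cl_closed c T₁ hT₁ U r)
    exact le_trans (aux_im_mono f (aux_le_cl c T₁ U r))
      (aux_le_spInt c T₂ le_rfl hSPO)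
  · intro hf U r hr _
    have hSPC : SPC c T₂ (im f (intr T₁ U r)) r :=
      hf (intr T₁ U r) r hr (aux_intr_open T₁ hT₁ U r)
    exact le_trans (aux_spCl_le c T₂ le_rfl hSPC)
      (aux_im_mono f (aux_intr_le T₁ U r))
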